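/- For every n ≥ 1 and all p, q ≥ 1 there exists a bound N = N(n, p, q) ∈ ℕ with the following property. Let x(t) = (x₁(t), …, xₙ(t)) : (ℂ,0) → (ℂⁿ,0) be any germ of an analytic vector-function satisfying a system Sᵢ(x(t), t)·xᵢ′(t) = Qᵢ(x(t), t), i = 1, …, n, where the Sᵢ and Qᵢ are polynomials in (x, t) of degree at most q and Sᵢ(0,0) ≠ 0 for all i. Let P be any polynomial in (x, t) of degree at most p such that p(t) := P(x(t), t) is not identically zero. Then the multiplicity of the zero of p(t) at t = 0 (its order of vanishing) is at most N. -/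

import Mathlib

/-!
Let `D` be the derivation `∏ⱼ Sⱼ · (∂ₜ + ∑ᵢ (Qᵢ / Sᵢ) ∂ₓᵢ)` of `ℂ[x, t]`. Along a solution,
`pₖ(t) := (Dᵏ P)(x(t), t)` satisfies `pₖ₊₁ = u · pₖ'` with `u(0) = ∏ⱼ Sⱼ(0, 0) ≠ 0`, so if `p = p₀`
vanishes to order `m` then `pₖ(0) = 0` for `k < m` and `pₘ(0) ≠ 0`. Since `x(0) = 0`, `pₖ(0)` is the
constant coefficient of `Dᵏ P`, a polynomial `cₖ` in the coefficients of `S`, `Q`, `P`, which range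
over a finite-dimensional space once the degrees are bounded. By Hilbert's basis theorem the ideal
generated by all the `cₖ` is generated by `c₀, …, c_{N-1}` for some `N = N(n, p, q)`; a system for
which these vanish has all `cₖ = 0`, so `m < N`.
-/

open MvPolynomial Filter Finset Topology

theorem MvPolynomial.exists_hasDerivAt_eval_of_derivation {σ 𝕜 : Type*}
    [NontriviallyNormedField 𝕜] {γ : 𝕜 → σ → 𝕜} {γ' : σ → 𝕜} {t c : 𝕜}
    (D : Derivation 𝕜 (MvPolynomial σ 𝕜) (MvPolynomial σ 𝕜))
    (hγ : ∀ v, HasDerivAt (γ · v) (γ' v) t) (hD : ∀ v, c * γ' v = eval (γ t) (D (X v)))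
    (F : MvPolynomial σ 𝕜) :
    ∃ f', HasDerivAt (fun s => eval (γ s) F) f' t ∧ c * f' = eval (γ t) (D F) := by
  induction F using MvPolynomial.induction_on with
  | C a => exact ⟨0, by simpa using hasDerivAt_const t a, by simp [derivation_C]⟩
  | add F G hF hG =>
    obtain ⟨f', hf', hcf⟩ := hF
    obtain ⟨g', hg', hcg⟩ := hG
    exact ⟨f' + g', by simpa using hf'.fun_add hg', by simp [mul_add, hcf, hcg]⟩
  | mul_X F v hF =>
    obtain ⟨f', hf', hcf⟩ := hF
    refine ⟨f' * γ t v + eval (γ t) F * γ' v, by simpa using hf'.fun_mul (hγ v), ?_⟩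
    simp only [Derivation.leibniz, smul_eq_mul, eval_add, eval_mul, eval_X, ← hcf, ← hD v]
    ring

section AnalyticOrder

variable {𝕜 : Type*} [NontriviallyNormedField 𝕜] [CharZero 𝕜] [CompleteSpace 𝕜]
  {u : 𝕜 → 𝕜} {z₀ : 𝕜}

theorem analyticOrderAt_mul_deriv_of_eq_add_one {g : 𝕜 → 𝕜} (hu : AnalyticAt 𝕜 u z₀)
    (hu₀ : u z₀ ≠ 0) (hg : AnalyticAt 𝕜 g z₀) {m : ℕ} (hm : analyticOrderAt g z₀ = m + 1) :
    analyticOrderAt (fun z => u z * deriv g z) z₀ = m := by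
  rw [← Pi.mul_def, analyticOrderAt_mul hu hg.deriv, hu.analyticOrderAt_eq_zero.mpr hu₀, zero_add,
    analyticOrderAt_deriv_of_pos hg hm]

theorem analyticOrderAt_eq_sub_of_eventuallyEq_mul_deriv {g : ℕ → 𝕜 → 𝕜}
    (hg : ∀ k, AnalyticAt 𝕜 (g k) z₀) (hu : AnalyticAt 𝕜 u z₀) (hu₀ : u z₀ ≠ 0)
    (hstep : ∀ k, g (k + 1) =ᶠ[𝓝 z₀] fun z => u z * deriv (g k) z) {m : ℕ}
    (hm : analyticOrderAt (g 0) z₀ = m) {k : ℕ} (hk : k ≤ m) :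
    analyticOrderAt (g k) z₀ = (m - k : ℕ) := by
  induction k with
  | zero => simpa using hm
  | succ k ih =>
    rw [analyticOrderAt_congr (hstep k)]
    refine analyticOrderAt_mul_deriv_of_eq_add_one hu hu₀ (hg k) ?_
    rw [ih (by omega)]
    norm_cast
    omega

theorem eq_zero_iff_lt_of_eventuallyEq_mul_deriv {g : ℕ → 𝕜 → 𝕜}
    (hg : ∀ k, AnalyticAt 𝕜 (g k) z₀) (hu : AnalyticAt 𝕜 u z₀) (hu₀ : u z₀ ≠ 0)
    (hstep : ∀ k, g (k + 1) =ᶠ[𝓝 z₀] fun z => u z * deriv (g k) z) {m : ℕ}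
    (hm : analyticOrderAt (g 0) z₀ = m) {k : ℕ} (hk : k ≤ m) :
    g k z₀ = 0 ↔ k < m := by
  rw [← not_iff_not, ← ne_eq, ← (hg k).analyticOrderAt_eq_zero,
    analyticOrderAt_eq_sub_of_eventuallyEq_mul_deriv hg hu hu₀ hstep hm hk]
  norm_cast
  omega

end AnalyticOrder

section VectorField

variable {ι : Type*} [Fintype ι]

theorem AnalyticAt.eval_sumElim {𝕜 : Type*} [NontriviallyNormedField 𝕜] {x : 𝕜 → ι → 𝕜}
    {t₀ : 𝕜} (hx : AnalyticAt 𝕜 x t₀) (F : MvPolynomial (ι ⊕ Unit) 𝕜) :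
    AnalyticAt 𝕜 (fun t => eval (Sum.elim (x t) fun _ => t) F) t₀ := by
  simp only [← coe_aeval_eq_eval]
  refine AnalyticAt.aeval_mvPolynomial (fun v => ?_) F
  rcases v with i | _
  · exact (ContinuousLinearMap.proj i).analyticAt _ |>.comp hx
  · exact analyticAt_id

variable [DecidableEq ι]

/-- The system `xᵢ' = Qᵢ / Sᵢ`, `t' = 1`, with denominators cleared by the factor `∏ⱼ Sⱼ`. -/
noncomputable def odeVectorField {R : Type*} [CommSemiring R]
    (S Q : ι → MvPolynomial (ι ⊕ Unit) R) : ι ⊕ Unit → MvPolynomial (ι ⊕ Unit) R :=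
  Sum.elim (fun i => Q i * ∏ j ∈ univ.erase i, S j) fun _ => ∏ j, S j

theorem map_comp_odeVectorField {R R' : Type*} [CommSemiring R] [CommSemiring R'] (φ : R →+* R')
    (S Q : ι → MvPolynomial (ι ⊕ Unit) R) :
    MvPolynomial.map φ ∘ odeVectorField S Q =
      odeVectorField (MvPolynomial.map φ ∘ S) (MvPolynomial.map φ ∘ Q) := by
  funext v
  rcases v with i | _ <;> simp [odeVectorField]

variable {𝕜 : Type*} [NontriviallyNormedField 𝕜] {x : 𝕜 → ι → 𝕜}
  {S Q : ι → MvPolynomial (ι ⊕ Unit) 𝕜}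

theorem mul_deriv_eval_eq_mkDerivation_odeVectorField {t : 𝕜} (hx : DifferentiableAt 𝕜 x t)
    (hode : ∀ i, eval (Sum.elim (x t) fun _ => t) (S i) * deriv (fun s => x s i) t =
      eval (Sum.elim (x t) fun _ => t) (Q i))
    (F : MvPolynomial (ι ⊕ Unit) 𝕜) :
    eval (Sum.elim (x t) fun _ => t) (∏ i, S i) *
        deriv (fun s => eval (Sum.elim (x s) fun _ => s) F) t =
      eval (Sum.elim (x t) fun _ => t) (mkDerivation 𝕜 (odeVectorField S Q) F) := by
  have hγ : ∀ v : ι ⊕ Unit, HasDerivAt (fun s => Sum.elim (x s) (fun _ => s) v)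
      (Sum.elim (fun i => deriv (fun s => x s i) t) (fun _ => 1) v) t := by
    rintro (i | _)
    · exact (differentiableAt_pi.mp hx i).hasDerivAt
    · exact hasDerivAt_id t
  have hV : ∀ v : ι ⊕ Unit, eval (Sum.elim (x t) fun _ => t) (∏ i, S i) *
      Sum.elim (fun i => deriv (fun s => x s i) t) (fun _ => 1) v =
        eval (Sum.elim (x t) fun _ => t) (mkDerivation 𝕜 (odeVectorField S Q) (X v)) := by
    rintro (i | _)
    · simp only [Sum.elim_inl, mkDerivation_X, odeVectorField, map_prod, eval_mul]
      rw [← mul_prod_erase univ _ (mem_univ i)]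
      linear_combination (∏ j ∈ univ.erase i, eval (Sum.elim (x t) fun _ => t) (S j)) * hode i
    · simp [odeVectorField]
  obtain ⟨f', hf', hcf⟩ := exists_hasDerivAt_eval_of_derivation _ hγ hV F
  rwa [hf'.deriv]

theorem eventuallyEq_eval_mkDerivation_odeVectorField [CompleteSpace 𝕜] {t₀ : 𝕜}
    (hx : AnalyticAt 𝕜 x t₀)
    (hode : ∀ᶠ t in 𝓝 t₀, ∀ i, eval (Sum.elim (x t) fun _ => t) (S i) * deriv (fun s => x s i) t =
      eval (Sum.elim (x t) fun _ => t) (Q i))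
    (F : MvPolynomial (ι ⊕ Unit) 𝕜) :
    (fun t => eval (Sum.elim (x t) fun _ => t) (mkDerivation 𝕜 (odeVectorField S Q) F)) =ᶠ[𝓝 t₀]
      fun t => eval (Sum.elim (x t) fun _ => t) (∏ i, S i) *
        deriv (fun s => eval (Sum.elim (x s) fun _ => s) F) t := by
  filter_upwards [hode, hx.eventually_analyticAt] with t hodet hxt
  exact (mul_deriv_eval_eq_mkDerivation_odeVectorField hxt.differentiableAt hodet F).symm

theorem eval_iterate_mkDerivation_odeVectorField_eq_zero_iff [CharZero 𝕜] [CompleteSpace 𝕜]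
    {t₀ : 𝕜} (hx : AnalyticAt 𝕜 x t₀)
    (hode : ∀ᶠ t in 𝓝 t₀, ∀ i, eval (Sum.elim (x t) fun _ => t) (S i) * deriv (fun s => x s i) t =
      eval (Sum.elim (x t) fun _ => t) (Q i))
    (hS₀ : eval (Sum.elim (x t₀) fun _ => t₀) (∏ i, S i) ≠ 0) {P : MvPolynomial (ι ⊕ Unit) 𝕜}
    {m : ℕ} (hm : analyticOrderAt (fun t => eval (Sum.elim (x t) fun _ => t) P) t₀ = m) {k : ℕ}
    (hk : k ≤ m) :
    eval (Sum.elim (x t₀) fun _ => t₀) ((mkDerivation 𝕜 (odeVectorField S Q))^[k] P) = 0 ↔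
      k < m := by
  refine eq_zero_iff_lt_of_eventuallyEq_mul_deriv
    (g := fun k t => eval (Sum.elim (x t) fun _ => t) ((mkDerivation 𝕜 (odeVectorField S Q))^[k] P))
    (fun k => hx.eval_sumElim _) (hx.eval_sumElim _) hS₀ (fun k => ?_) hm hk
  have h := eventuallyEq_eval_mkDerivation_odeVectorField hx hode
    ((mkDerivation 𝕜 (odeVectorField S Q))^[k] P)
  rwa [← Function.iterate_succ_apply' (mkDerivation 𝕜 (odeVectorField S Q))] at h

end VectorField

section Generic

variable {σ ι R : Type*} [CommSemiring R]

theorem MvPolynomial.semiconj_map_mkDerivation {R' : Type*} [CommSemiring R'] (φ : R →+* R')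
    (V : σ → MvPolynomial σ R) :
    Function.Semiconj (map φ) (mkDerivation R V) (mkDerivation R' (map φ ∘ V)) := by
  intro F
  induction F using MvPolynomial.induction_on with
  | C a => simp [derivation_C]
  | add F G hF hG => simp [hF, hG]
  | mul_X F v hF => simp [Derivation.leibniz, hF]

theorem MvPolynomial.support_subset_of_totalDegree_le [Finite σ] {F : MvPolynomial σ R} {d : ℕ}
    (hF : F.totalDegree ≤ d) : F.support ⊆ (Finsupp.finite_of_degree_le d).toFinset :=
  fun s hs => by
    rw [Set.Finite.mem_toFinset]
    exact (le_totalDegree hs).trans hF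

noncomputable def MvPolynomial.genericPoly (M : Finset (σ →₀ ℕ)) (i : ι) :
    MvPolynomial σ (MvPolynomial (ι × M) R) :=
  ∑ s : M, monomial (s : σ →₀ ℕ) (X (i, s))

theorem MvPolynomial.map_eval_coeff_genericPoly {M : Finset (σ →₀ ℕ)} {F : ι → MvPolynomial σ R}
    (hF : ∀ i, (F i).support ⊆ M) (i : ι) :
    map (eval fun js : ι × M => coeff js.2 (F js.1)) (genericPoly (R := R) M i) = F i := by
  simp only [genericPoly, map_sum, map_monomial, eval_X]
  rw [Finset.sum_coe_sort M fun s : σ →₀ ℕ => monomial s (coeff s (F i))]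
  calc _ = ∑ s ∈ (F i).support, monomial s (coeff s (F i)) :=
        (Finset.sum_subset (hF i) fun s _ hs => by rw [notMem_support_iff.mp hs, map_zero]).symm
    _ = F i := support_sum_monomial_coeff _

variable [Fintype ι] [DecidableEq ι] (M : Finset (ι ⊕ Unit →₀ ℕ))

noncomputable def genericOdeConstantCoeff (k : ℕ) : MvPolynomial ((ι ⊕ ι ⊕ Unit) × M) R :=
  constantCoeff ((mkDerivation _ (odeVectorField (fun i => genericPoly M (Sum.inl i))
    fun i => genericPoly M (Sum.inr (Sum.inl i))))^[k] (genericPoly M (Sum.inr (Sum.inr ()))))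

theorem eval_genericOdeConstantCoeff {S Q : ι → MvPolynomial (ι ⊕ Unit) R}
    {P : MvPolynomial (ι ⊕ Unit) R} (hS : ∀ i, (S i).support ⊆ M) (hQ : ∀ i, (Q i).support ⊆ M)
    (hP : P.support ⊆ M) (k : ℕ) :
    eval (fun js => coeff js.2 (Sum.elim S (Sum.elim Q fun _ => P) js.1))
        (genericOdeConstantCoeff M k) =
      constantCoeff ((mkDerivation R (odeVectorField S Q))^[k] P) := by
  have hF : ∀ j, (Sum.elim S (Sum.elim Q fun _ : Unit => P) j).support ⊆ M := by
    rintro (i | i | _) <;> simp [hS, hQ, hP]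
  rw [genericOdeConstantCoeff, ← constantCoeff_map,
    ((semiconj_map_mkDerivation _ _).iterate_right k).eq, map_comp_odeVectorField]
  simp only [Function.comp_def, map_eval_coeff_genericPoly hF, Sum.elim_inl, Sum.elim_inr]

end Generic

theorem IsNoetherianRing.exists_forall_map_eq_zero {A B : Type*} [CommRing A] [IsNoetherianRing A]
    [Semiring B] (c : ℕ → A) :
    ∃ N, ∀ φ : A →+* B, (∀ k < N, φ (c k) = 0) → ∀ m, φ (c m) = 0 := by
  obtain ⟨N, hN⟩ := monotone_stabilizes_iff_noetherian.mpr inferInstance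
    ⟨fun m => Ideal.span (c '' Set.Iio m),
      fun a b hab => Ideal.span_mono (Set.image_mono (Set.Iio_subset_Iio hab))⟩
  refine ⟨N, fun φ hφ m => ?_⟩
  have hker : Ideal.span (c '' Set.Iio N) ≤ RingHom.ker φ :=
    Ideal.span_le.mpr (by rintro _ ⟨k, hk, rfl⟩; exact hφ k hk)
  refine hker ?_
  rw [show Ideal.span (c '' Set.Iio N) = _ from hN (max N (m + 1)) (le_max_left _ _)]
  exact Ideal.subset_span ⟨m, by simp, rfl⟩

theorem exists_multiplicity_bound_for_ODE_system_general
    (n p q : ℕ) :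
    ∃ N : ℕ,
      ∀ (S Q : Fin n → MvPolynomial (Fin n ⊕ Unit) ℂ),
        (∀ i, (S i).totalDegree ≤ q) → (∀ i, (Q i).totalDegree ≤ q) →
        (∀ i, eval (Sum.elim (0 : Fin n → ℂ) (fun _ => (0 : ℂ))) (S i) ≠ 0) →
        ∀ (x : ℂ → (Fin n → ℂ)), AnalyticAt ℂ x 0 → x 0 = 0 →
        (∀ᶠ t in nhds (0 : ℂ), ∀ i,
          eval (Sum.elim (x t) (fun _ => t)) (S i) * deriv (fun s => x s i) t =
            eval (Sum.elim (x t) (fun _ => t)) (Q i)) →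
        ∀ (P : MvPolynomial (Fin n ⊕ Unit) ℂ), P.totalDegree ≤ p →
        ∀ (hcomp : AnalyticAt ℂ (fun t => eval (Sum.elim (x t) (fun _ => t)) P) 0),
        (¬ ∀ᶠ t in nhds (0 : ℂ), eval (Sum.elim (x t) (fun _ => t)) P = 0) →
        analyticOrderAt (fun t => eval (Sum.elim (x t) (fun _ => t)) P) 0 ≤ (N : ℕ∞) := by
  obtain ⟨N, hN⟩ := IsNoetherianRing.exists_forall_map_eq_zero (B := ℂ) <| genericOdeConstantCoeff
    (R := ℂ) (Finsupp.finite_of_degree_le (σ := Fin n ⊕ Unit) (max p q)).toFinset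
  refine ⟨N, fun S Q hS hQ hS₀ x hx hx₀ hode P hP _ hP₀ => ?_⟩
  have hc : ∀ k, eval (Sum.elim (x 0) fun _ => 0) ((mkDerivation ℂ (odeVectorField S Q))^[k] P) =
      eval _ (genericOdeConstantCoeff _ k) := fun k => by
    rw [eval_genericOdeConstantCoeff _
      (fun i => support_subset_of_totalDegree_le ((hS i).trans (le_max_right p q)))
      (fun i => support_subset_of_totalDegree_le ((hQ i).trans (le_max_right p q)))
      (support_subset_of_totalDegree_le (hP.trans (le_max_left p q))),
      hx₀, show Sum.elim (0 : Fin n → ℂ) (fun _ => 0) = 0 from Sum.elim_zero_zero, eval_zero]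
  have hu₀ : eval (Sum.elim (x 0) fun _ => 0) (∏ i, S i) ≠ 0 := by
    rw [hx₀, map_prod]
    exact prod_ne_zero_iff.mpr fun i _ => hS₀ i
  obtain ⟨m, hm⟩ := ENat.ne_top_iff_exists.mp (mt analyticOrderAt_eq_top.mp hP₀)
  have hzero {k : ℕ} (hk : k ≤ m) :=
    eval_iterate_mkDerivation_odeVectorField_eq_zero_iff hx hode hu₀ hm.symm hk
  rw [← hm, Nat.cast_le]
  by_contra! hNm
  have hcm := hN _ (fun k hk => by rw [← hc, hzero (by omega)]; omega) m
  rw [← hc, hzero le_rfl] at hcm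
  exact lt_irrefl m hcm

/-- (Gabrielov, introduction): For every `n ≥ 1`, `p ≥ 1`, `q ≥ 1` there is a bound `N(n,p,q)`
such that for any analytic germ `x(t) : (ℂ,0) → (ℂⁿ,0)` satisfying a system of algebraic
differential equations `Sᵢ(x(t),t) xᵢ'(t) = Qᵢ(x(t),t)` with `Sᵢ, Qᵢ` polynomial of degree at
most `q` and `Sᵢ(0,0) ≠ 0`, and any polynomial `P(x,t)` of degree at most `p` with
`p(t) = P(x(t),t) ≢ 0`, the multiplicity of the zero of `p(t)` at `t = 0` is at most `N`.
(Variables are indexed by `Fin n ⊕ Unit`, the `Unit` index being the variable `t`.) -/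
theorem exists_multiplicity_bound_for_ODE_system
    (n p q : ℕ) (hn : 1 ≤ n) (hp : 1 ≤ p) (hq : 1 ≤ q) :
    ∃ N : ℕ,
      ∀ (S Q : Fin n → MvPolynomial (Fin n ⊕ Unit) ℂ),
        (∀ i, (S i).totalDegree ≤ q) → (∀ i, (Q i).totalDegree ≤ q) →
        (∀ i, eval (Sum.elim (0 : Fin n → ℂ) (fun _ => (0 : ℂ))) (S i) ≠ 0) →
        ∀ (x : ℂ → (Fin n → ℂ)), AnalyticAt ℂ x 0 → x 0 = 0 →
        (∀ᶠ t in nhds (0 : ℂ), ∀ i,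
          eval (Sum.elim (x t) (fun _ => t)) (S i) * deriv (fun s => x s i) t =
            eval (Sum.elim (x t) (fun _ => t)) (Q i)) →
        ∀ (P : MvPolynomial (Fin n ⊕ Unit) ℂ), P.totalDegree ≤ p →
        ∀ (hcomp : AnalyticAt ℂ (fun t => eval (Sum.elim (x t) (fun _ => t)) P) 0),
        (¬ ∀ᶠ t in nhds (0 : ℂ), eval (Sum.elim (x t) (fun _ => t)) P = 0) →
        analyticOrderAt (fun t => eval (Sum.elim (x t) (fun _ => t)) P) 0 ≤ (N : ℕ∞) :=
  exists_multiplicity_bound_for_ODE_system_general n p q
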